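/- Let a, b > 0 with b > 1 > a, set y₂ = −(b − 1)/(a − b) and let x_k be either of ±√(y₂/a − y₂²). Let J be the Jacobian matrix of f_{a,b} at (x_k, y₂). Then the discriminant of its characteristic polynomial satisfies (tr J)² − 4·det J = (b − 1)²·b·(b + 8a(a − 1)) / (a²(b − a)²); in particular the eigenvalues of J are non-real (s₃, s₄ are strong attracting foci) if and only if |8a(a − 1)| > b, and they are real and negative (s₃, s₄ are attracting nodes) if |8a(a − 1)| ≤ b. -/

import Mathlib

/-- The CDK polynomial vector field. -/
def cdk (a b : ℝ) : ℝ × ℝ → ℝ × ℝ := fun p =>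
  (p.1 * p.2 - a * (p.1 ^ 3 + p.1 * p.2 ^ 2),
   p.2 ^ 2 - (b * p.2 - b + 1) * (p.1 ^ 2 + p.2 ^ 2))

/-- The Jacobian matrix of a planar vector field at a point, expressed via the
total (Fréchet) derivative applied to the standard basis vectors. -/
noncomputable def jacobianAt (f : ℝ × ℝ → ℝ × ℝ) (p : ℝ × ℝ) : Matrix (Fin 2) (Fin 2) ℝ :=
  !![(fderiv ℝ f p (1, 0)).1, (fderiv ℝ f p (0, 1)).1;
     (fderiv ℝ f p (1, 0)).2, (fderiv ℝ f p (0, 1)).2]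

/-!
At `s₃, s₄` one has `x² + y² = y / a` and `y = (b - 1) / (b - a)`, so the entries of the
Jacobian are rational in `a, b`: its trace is `-b (b - 1) / (a (b - a)) < 0` and its determinant
`2 b (1 - a) (b - 1)² / (a (b - a)²) > 0`. The discriminant `tr² - 4 det` then factors with the
sign of `b + 8a(a - 1)`, which for `0 < a < 1` is negative exactly when `|8a(a - 1)| > b`.
Negative discriminant means non-real eigenvalues; otherwise the eigenvalues are real, and a
negative trace together with a positive determinant makes them negative.
-/

lemma jacobianAt_cdk (a b x y : ℝ) :
    jacobianAt (cdk a b) (x, y) =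
      !![y - a * (3 * x ^ 2 + y ^ 2), x - 2 * a * x * y;
         -(2 * x) * (b * y - b + 1), 2 * y - b * (x ^ 2 + y ^ 2) - 2 * y * (b * y - b + 1)] := by
  have hcdk : cdk a b = fun p : ℝ × ℝ =>
      (p.1 * p.2 - a * (p.1 * p.1 * p.1 + p.1 * (p.2 * p.2)),
       p.2 * p.2 - (b * p.2 - b + 1) * (p.1 * p.1 + p.2 * p.2)) := by
    funext p
    simp only [cdk, Prod.mk.injEq]
    constructor <;> ring
  have h1 : HasFDerivAt (fun p : ℝ × ℝ => p.1) (ContinuousLinearMap.fst ℝ ℝ ℝ) (x, y) :=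
    hasFDerivAt_fst
  have h2 : HasFDerivAt (fun p : ℝ × ℝ => p.2) (ContinuousLinearMap.snd ℝ ℝ ℝ) (x, y) :=
    hasFDerivAt_snd
  have hf := ((h1.mul h2).sub ((((h1.mul h1).mul h1).add (h1.mul (h2.mul h2))).const_mul a)).prodMk
    ((h2.mul h2).sub
      ((((h2.const_mul b).sub_const b).add_const 1).mul ((h1.mul h1).add (h2.mul h2))))
  have hfderiv : fderiv ℝ (cdk a b) (x, y) = _ := (hcdk ▸ hf).fderiv
  rw [jacobianAt, hfderiv]
  ext i j
  fin_cases i <;> fin_cases j <;>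
    simp only [Pi.mul_apply, Pi.add_apply, smul_add, smul_eq_mul, ContinuousLinearMap.prod_apply,
      sub_apply, add_apply, smul_apply,
      ContinuousLinearMap.coe_fst', ContinuousLinearMap.coe_snd', Fin.zero_eta, Fin.mk_one,
      Fin.isValue, Matrix.of_apply, Matrix.cons_val', Matrix.cons_val_zero, Matrix.cons_val_one,
      Matrix.cons_val_fin_one] <;>
    ring

lemma forall_root_im_ne_zero_iff (T D : ℝ) :
    (∀ z : ℂ, z ^ 2 - (T : ℂ) * z + (D : ℂ) = 0 → z.im ≠ 0) ↔ T ^ 2 - 4 * D < 0 := by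
  constructor
  · intro hroots
    by_contra! hdisc
    have hroot : ((T + √(T ^ 2 - 4 * D)) / 2) ^ 2 - T * ((T + √(T ^ 2 - 4 * D)) / 2) + D = 0 := by
      linear_combination Real.sq_sqrt hdisc / 4
    exact hroots _ (by exact_mod_cast hroot) (Complex.ofReal_im _)
  · intro hdisc z hz hre
    rw [← Complex.re_add_im z, hre, Complex.ofReal_zero, zero_mul, add_zero] at hz
    have hroot : z.re ^ 2 - T * z.re + D = 0 := by exact_mod_cast hz
    nlinarith [sq_nonneg (2 * z.re - T)]

lemma neg_of_sq_sub_mul_add_eq_zero {T D lam : ℝ} (hT : T ≤ 0) (hD : 0 < D)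
    (h : lam ^ 2 - T * lam + D = 0) : lam < 0 := by
  by_contra! hlam
  nlinarith [mul_nonneg hlam (neg_nonneg.2 hT)]

section StationaryPoint

variable {a b x y : ℝ}

lemma trace_jacobianAt_cdk_of_stationary (ha : a ≠ 0) (hba : b - a ≠ 0)
    (hy : y = (b - 1) / (b - a)) (hx : x ^ 2 = y / a - y ^ 2) :
    (jacobianAt (cdk a b) (x, y)).trace = -(b * (b - 1)) / (a * (b - a)) := by
  rw [jacobianAt_cdk, Matrix.trace_fin_two_of, hx, hy]
  field_simp
  ring

lemma det_jacobianAt_cdk_of_stationary (ha : a ≠ 0) (hba : b - a ≠ 0)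
    (hy : y = (b - 1) / (b - a)) (hx : x ^ 2 = y / a - y ^ 2) :
    (jacobianAt (cdk a b) (x, y)).det = 2 * b * (1 - a) * (b - 1) ^ 2 / (a * (b - a) ^ 2) := by
  rw [jacobianAt_cdk, Matrix.det_fin_two_of]
  have hoff : (x - 2 * a * x * y) * (-(2 * x) * (b * y - b + 1))
      = -(2 * x ^ 2) * ((1 - 2 * a * y) * (b * y - b + 1)) := by ring
  rw [hoff, hx, hy]
  field_simp
  ring

lemma trace_sq_sub_four_mul_det_jacobianAt_cdk_of_stationary (ha : a ≠ 0) (hba : b - a ≠ 0)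
    (hy : y = (b - 1) / (b - a)) (hx : x ^ 2 = y / a - y ^ 2) :
    (jacobianAt (cdk a b) (x, y)).trace ^ 2 - 4 * (jacobianAt (cdk a b) (x, y)).det
      = (b - 1) ^ 2 * b * (b + 8 * a * (a - 1)) / (a ^ 2 * (b - a) ^ 2) := by
  rw [trace_jacobianAt_cdk_of_stationary ha hba hy hx, det_jacobianAt_cdk_of_stationary ha hba hy hx]
  field_simp
  ring

lemma div_sub_sq_nonneg_of_stationary (ha : 0 < a) (ha1 : a < 1) (hb1 : 1 < b)
    (hy : y = (b - 1) / (b - a)) : 0 ≤ y / a - y ^ 2 := by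
  have hba : 0 < b - a := by linarith
  have hb : 0 < (b - 1) * b * (1 - a) := by apply mul_pos (mul_pos _ _) <;> linarith
  rw [hy, show (b - 1) / (b - a) / a - ((b - 1) / (b - a)) ^ 2
      = (b - 1) * b * (1 - a) / (a * (b - a) ^ 2) by field_simp; ring]
  positivity

end StationaryPoint

lemma sq_eq_of_eq_sqrt_or_eq_neg_sqrt {x r : ℝ} (hr : 0 ≤ r) (hx : x = √r ∨ x = -√r) :
    x ^ 2 = r := by
  rcases hx with rfl | rfl <;> simp [Real.sq_sqrt hr]

lemma abs_eight_mul_mul_sub_one_gt_iff {a b : ℝ} (ha : 0 < a) (ha1 : a < 1) :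
    |8 * a * (a - 1)| > b ↔ b + 8 * a * (a - 1) < 0 := by
  rw [abs_of_neg (by nlinarith)]
  constructor <;> intro h <;> linarith

theorem cdk_s34_focus_or_node_general (a b : ℝ) (ha : 0 < a)
    (hab : 1 < b ∧ a < 1)
    (y₂ : ℝ) (hy₂ : y₂ = -(b - 1) / (a - b)) (xk : ℝ)
    (hxk : xk = Real.sqrt (y₂ / a - y₂ ^ 2) ∨ xk = -Real.sqrt (y₂ / a - y₂ ^ 2)) :
    (jacobianAt (cdk a b) (xk, y₂)).trace ^ 2 - 4 * (jacobianAt (cdk a b) (xk, y₂)).det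
        = (b - 1) ^ 2 * b * (b + 8 * a * (a - 1)) / (a ^ 2 * (b - a) ^ 2) ∧
    ((∀ z : ℂ, z ^ 2 - ((jacobianAt (cdk a b) (xk, y₂)).trace : ℂ) * z
          + ((jacobianAt (cdk a b) (xk, y₂)).det : ℂ) = 0 → z.im ≠ 0)
        ↔ |8 * a * (a - 1)| > b) ∧
    (|8 * a * (a - 1)| ≤ b →
      ∀ lam : ℝ, lam ^ 2 - (jacobianAt (cdk a b) (xk, y₂)).trace * lam
          + (jacobianAt (cdk a b) (xk, y₂)).det = 0 → lam < 0) := by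
  obtain ⟨hb1, ha1⟩ := hab
  have hba : 0 < b - a := by linarith
  have hb1' : 0 < b - 1 := by linarith
  have hy : y₂ = (b - 1) / (b - a) := by
    rw [hy₂, ← neg_sub b a, div_neg, neg_div, neg_neg]
  have hx : xk ^ 2 = y₂ / a - y₂ ^ 2 :=
    sq_eq_of_eq_sqrt_or_eq_neg_sqrt (div_sub_sq_nonneg_of_stationary ha ha1 hb1 hy) hxk
  have hdisc := trace_sq_sub_four_mul_det_jacobianAt_cdk_of_stationary ha.ne' hba.ne' hy hx
  have hscale : 0 < (b - 1) ^ 2 * b / (a ^ 2 * (b - a) ^ 2) := by positivity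
  refine ⟨hdisc, ?_, fun _ _ => neg_of_sq_sub_mul_add_eq_zero ?_ ?_⟩
  · rw [forall_root_im_ne_zero_iff, hdisc, abs_eight_mul_mul_sub_one_gt_iff ha ha1,
      mul_div_right_comm]
    exact ⟨fun h => neg_of_mul_neg_right h hscale.le, mul_neg_of_pos_of_neg hscale⟩
  · rw [trace_jacobianAt_cdk_of_stationary ha.ne' hba.ne' hy hx, neg_div, neg_nonpos]
    positivity
  · rw [det_jacobianAt_cdk_of_stationary ha.ne' hba.ne' hy hx]
    have : 0 < 1 - a := by linarith
    positivity

/-- for `b > 1 > a`, the discriminant of the characteristic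
polynomial of the Jacobian `J` at `s₃`, `s₄` equals
`(b−1)²·b·(b+8a(a−1))/(a²(b−a)²)`; the eigenvalues are non-real iff
`|8a(a−1)| > b` (strong attracting foci) and real and negative if
`|8a(a−1)| ≤ b` (attracting nodes). -/
theorem cdk_s34_focus_or_node (a b : ℝ) (ha : 0 < a) (hb : 0 < b)
    (hab : 1 < b ∧ a < 1)
    (y₂ : ℝ) (hy₂ : y₂ = -(b - 1) / (a - b)) (xk : ℝ)
    (hxk : xk = Real.sqrt (y₂ / a - y₂ ^ 2) ∨ xk = -Real.sqrt (y₂ / a - y₂ ^ 2)) :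
    (jacobianAt (cdk a b) (xk, y₂)).trace ^ 2 - 4 * (jacobianAt (cdk a b) (xk, y₂)).det
        = (b - 1) ^ 2 * b * (b + 8 * a * (a - 1)) / (a ^ 2 * (b - a) ^ 2) ∧
    ((∀ z : ℂ, z ^ 2 - ((jacobianAt (cdk a b) (xk, y₂)).trace : ℂ) * z
          + ((jacobianAt (cdk a b) (xk, y₂)).det : ℂ) = 0 → z.im ≠ 0)
        ↔ |8 * a * (a - 1)| > b) ∧
    (|8 * a * (a - 1)| ≤ b →
      ∀ lam : ℝ, lam ^ 2 - (jacobianAt (cdk a b) (xk, y₂)).trace * lam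
          + (jacobianAt (cdk a b) (xk, y₂)).det = 0 → lam < 0) :=
  cdk_s34_focus_or_node_general a b ha hab y₂ hy₂ xk hxk
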